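/- arXiv:2210.01541 — 5 statements merged into one kernel-verified Lean document; each statement's English description precedes it below -/
import Mathlib

section
/- Let D₁ and D₂ be t-structures on a triangulated category D with D₁^{≤0} ⊆ D₂^{≤0}. Then for every object X, the truncations satisfy (τ₂^{≤0} X)₁^{≥1} ≅ (τ₁^{≥1} X)₂^{≤0}, i.e., the truncation functors τ₁^{≥1} and τ₂^{≤0} commute up to natural isomorphism. -/
open CategoryTheory Category Limits Pretriangulated Triangulated

/-!
Let `A' → A → X` be the composite of the truncation maps `τ₁^{≤0} τ₂^{≤0} X → τ₂^{≤0} X → X`.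
By the octahedral axiom its cone `Y` sits in a triangle `P → Y → τ₂^{≥1} X` with
`P = (τ₂^{≤0} X)₁^{≥1}`. Since `D₂^{≥1} ⊆ D₁^{≥1}`, `Y` is `≥ 1` for `t₁`, so `A' → X → Y` is the
`t₁`-truncation triangle of `X` and `Y ≅ τ₁^{≥1} X`. Moreover `P` is `≤ 0` for `t₂`, being a cone
of `A' → A` with both ends in `D₂^{≤0}`, so `P → Y → τ₂^{≥1} X` is the `t₂`-truncation triangle
of `Y`, whence `P ≅ (τ₁^{≥1} X)₂^{≤0}`.
-/

variable {C : Type*} [Category C] [Preadditive C] [HasZeroObject C] [HasShift C ℤ]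
  [∀ (n : ℤ), (shiftFunctor C n).Additive] [Pretriangulated C]

namespace CategoryTheory.Triangulated.TStructure

lemma ge_le_ge_of_le_le {t₁ t₂ : TStructure C} (n₀ n₁ : ℤ) (h : n₀ + 1 = n₁)
    (ht : t₁.le n₀ ≤ t₂.le n₀) : t₂.ge n₁ ≤ t₁.ge n₁ := fun X hX ↦ by
  rw [t₁.ge_iff_isGE, t₁.isGE_iff_orthogonal n₀ n₁ h]
  exact fun Y f hY ↦ t₂.zero_of_isLE_of_isGE f n₀ n₁ (by lia) ⟨ht _ hY.le⟩ ⟨hX⟩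

lemma isLE₃ (t : TStructure C) (T : Triangle C) (hT : T ∈ distTriang C) (n : ℤ)
    (h₁ : t.IsLE T.obj₁ (n + 1)) (h₂ : t.IsLE T.obj₂ n) : t.IsLE T.obj₃ n :=
  t.isLE₂ _ (rot_of_distTriang _ hT) n h₂ (t.isLE_shift _ (n + 1) 1 n)

end CategoryTheory.Triangulated.TStructure

variable [IsTriangulated C]

/-- For t-structures `t₁`, `t₂` with `D₁^{≤0} ⊆ D₂^{≤0}`, one has
`(τ₂^{≤0} X)₁^{≥1} ≅ (τ₁^{≥1} X)₂^{≤0}` for every object `X`.  Truncations are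
encoded by their canonical distinguished triangles. -/
theorem stmt_2 (t₁ t₂ : TStructure C) (ht : t₁.le 0 ≤ t₂.le 0) (X : C)
    -- the D₂-canonical triangle of X : A = τ₂^{≤0} X
    (A B : C) (hA : t₂.le 0 A) (hB : t₂.ge 1 B)
    (f : A ⟶ X) (g : X ⟶ B) (h : B ⟶ A⟦(1 : ℤ)⟧)
    (hT : Triangle.mk f g h ∈ distTriang C)
    -- the D₁-canonical triangle of A : P = (τ₂^{≤0} X)₁^{≥1}
    (A' P : C) (hA' : t₁.le 0 A') (hP : t₁.ge 1 P)
    (f' : A' ⟶ A) (g' : A ⟶ P) (h' : P ⟶ A'⟦(1 : ℤ)⟧)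
    (hT' : Triangle.mk f' g' h' ∈ distTriang C)
    -- the D₁-canonical triangle of X : B' = τ₁^{≥1} X
    (A'' B' : C) (hA'' : t₁.le 0 A'') (hB' : t₁.ge 1 B')
    (f'' : A'' ⟶ X) (g'' : X ⟶ B') (h'' : B' ⟶ A''⟦(1 : ℤ)⟧)
    (hT'' : Triangle.mk f'' g'' h'' ∈ distTriang C)
    -- the D₂-canonical triangle of B' : Q = (τ₁^{≥1} X)₂^{≤0}
    (Q R : C) (hQ : t₂.le 0 Q) (hR : t₂.ge 1 R)
    (f''' : Q ⟶ B') (g''' : B' ⟶ R) (h''' : R ⟶ Q⟦(1 : ℤ)⟧)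
    (hT''' : Triangle.mk f''' g''' h''' ∈ distTriang C) :
    Nonempty (P ≅ Q) := by
  obtain ⟨Y, v, w, hY⟩ := distinguished_cocone_triangle (f' ≫ f)
  have oct := someOctahedron rfl hT' hT hY
  have hB₁ : t₁.IsGE B 1 := ⟨TStructure.ge_le_ge_of_le_le 0 1 rfl ht _ hB⟩
  have hY₁ : t₁.IsGE Y 1 := t₁.isGE₂ _ oct.mem 1 ⟨hP⟩ hB₁
  obtain ⟨e, -⟩ := t₁.triangle_iso_exists hY hT'' (Iso.refl X) 0 1 ⟨hA'⟩ hY₁ ⟨hA''⟩ ⟨hB'⟩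
  have hA'₂ : t₂.IsLE A' 0 := ⟨ht _ hA'⟩
  have hP₂ : t₂.IsLE P 0 := t₂.isLE₃ _ hT' 0 (t₂.isLE_of_le A' 0 1) ⟨hA⟩
  obtain ⟨e', -⟩ :=
    t₂.triangle_iso_exists oct.mem hT''' (Triangle.π₃.mapIso e) 0 1 hP₂ ⟨hB⟩ ⟨hQ⟩ ⟨hR⟩
  exact ⟨Triangle.π₁.mapIso e'⟩
end

section
/- Let D₁, D₂ be t-structures on a triangulated category with D₁^{≤0} ⊆ D₂^{≤0}, and let (U^{≤0}, U^{≥1}) be a pair of full subcategories of H = D₁^{≥1} ∩ D₂^{≤0} satisfying Hom(U^{≤0}, U^{≥1}) = 0 and such that every object of H sits in a triangle with first term in U^{≤0} and third term in U^{≥1}. Then the pair (D₁^{≤0} ∗ U^{≤0}, U^{≥1} ∗ D₂^{≥1}) satisfies the Hom-orthogonality and decomposition axioms of a t-structure on D: Hom(D₁^{≤0} ∗ U^{≤0}, U^{≥1} ∗ D₂^{≥1}) = 0, and every object X of D fits into a distinguished triangle R → X → Q → ΣR with R ∈ D₁^{≤0} ∗ U^{≤0} and Q ∈ U^{≥1}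 ∗ D₂^{≥1}. -/
/-
Everything is a statement about extension products `P ∗ Q`. Orthogonality is inherited by
extensions, so `Hom(D₁^{≤0} ∗ U^{≤0}, U^{≥1} ∗ D₂^{≥1}) = 0` reduces to the four vanishing
statements between the factors. For the decomposition, every object is in `D₁^{≤0} ∗ D₁^{≥1}`;
truncating with respect to `D₂` shows `D₁^{≥1} ⊆ H ∗ D₂^{≥1}`, and `H ⊆ U^{≤0} ∗ U^{≥1}` by
hypothesis. Associativity of `∗` (the octahedral axiom) then regroups
`D₁^{≤0} ∗ ((U^{≤0} ∗ U^{≥1}) ∗ D₂^{≥1})` as `(D₁^{≤0} ∗ U^{≤0}) ∗ (U^{≥1} ∗ D₂^{≥1})`.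
-/

open CategoryTheory Category Limits Pretriangulated Triangulated

variable {C : Type*} [Category C] [Preadditive C] [HasZeroObject C] [HasShift C ℤ]
  [∀ (n : ℤ), (shiftFunctor C n).Additive] [Pretriangulated C] [IsTriangulated C]

/-- `ExtStar S T` is the class of objects `Z` fitting in a distinguished triangle
`A → Z → B → A⟦1⟧` with `A ∈ S` and `B ∈ T`. -/
def ExtStar (S T : C → Prop) : C → Prop := fun Z =>
  ∃ (A B : C) (_ : S A) (_ : T B) (f : A ⟶ Z) (g : Z ⟶ B) (h : B ⟶ A⟦(1 : ℤ)⟧),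
    Triangle.mk f g h ∈ distTriang C

open ObjectProperty

namespace CategoryTheory.ObjectProperty

variable {D : Type*} [Category D] [HasZeroMorphisms D]

lemma le_leftOrthogonal_iff {P Q : ObjectProperty D} :
    P ≤ Q.leftOrthogonal ↔ Q ≤ P.rightOrthogonal :=
  ⟨fun h _ hY _ f hX ↦ h _ hX f hY, fun h _ hX _ f hY ↦ h _ hY f hX⟩

end CategoryTheory.ObjectProperty

section

variable {D : Type*} [Category D] [Preadditive D] [HasZeroObject D] [HasShift D ℤ]
  [∀ (n : ℤ), (shiftFunctor D n).Additive] [Pretriangulated D]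

lemma extStar_eq_extensionProduct (S T : D → Prop) : ExtStar S T = extensionProduct S T := by
  ext Z
  exact ⟨fun ⟨A, B, hA, hB, f, g, h, hT⟩ ↦ ⟨A, B, f, g, h, hT, hA, hB⟩,
    fun ⟨A, B, f, g, h, hT, hA, hB⟩ ↦ ⟨A, B, hA, hB, f, g, h, hT⟩⟩

namespace CategoryTheory.ObjectProperty

variable {P₁ P₂ Q₁ Q₂ R : ObjectProperty D}

lemma extensionProduct_le_leftOrthogonal (h₁ : P₁ ≤ R.leftOrthogonal)
    (h₂ : P₂ ≤ R.leftOrthogonal) : extensionProduct P₁ P₂ ≤ R.leftOrthogonal :=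
  extensionProduct_le_of_isTriangulatedClosed₂ h₁ h₂

lemma extensionProduct_le_rightOrthogonal (h₁ : Q₁ ≤ R.rightOrthogonal)
    (h₂ : Q₂ ≤ R.rightOrthogonal) : extensionProduct Q₁ Q₂ ≤ R.rightOrthogonal :=
  extensionProduct_le_of_isTriangulatedClosed₂ h₁ h₂

lemma extensionProduct_le_leftOrthogonal_extensionProduct
    (h₁₁ : P₁ ≤ Q₁.leftOrthogonal) (h₁₂ : P₁ ≤ Q₂.leftOrthogonal)
    (h₂₁ : P₂ ≤ Q₁.leftOrthogonal) (h₂₂ : P₂ ≤ Q₂.leftOrthogonal) :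
    extensionProduct P₁ P₂ ≤ (extensionProduct Q₁ Q₂).leftOrthogonal := by
  refine extensionProduct_le_leftOrthogonal ?_ ?_ <;> rw [le_leftOrthogonal_iff] <;>
    refine extensionProduct_le_rightOrthogonal ?_ ?_ <;> rwa [← le_leftOrthogonal_iff]

end CategoryTheory.ObjectProperty

namespace CategoryTheory.Triangulated.TStructure

lemma extensionProduct_le_zero_ge_one_eq_top (t : TStructure D) :
    extensionProduct (t.le 0) (t.ge 1) = ⊤ := by
  refine eq_top_iff.2 fun X _ ↦ ?_
  obtain ⟨A, B, hA, hB, f, g, h, hT⟩ := t.exists_triangle_zero_one X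
  exact ⟨A, B, f, g, h, hT, hA, hB⟩

variable {t₁ t₂ : TStructure D}

lemma ge_one_le_of_le_zero_le (h : t₁.le 0 ≤ t₂.le 0) : t₂.ge 1 ≤ t₁.ge 1 := by
  intro X hX
  rw [t₁.ge_iff_isGE, t₁.isGE_iff_orthogonal 0 1 rfl]
  exact fun Y f hY ↦ t₂.zero' f (h Y hY.le) hX

lemma ge_one_le_extensionProduct (h : t₁.le 0 ≤ t₂.le 0) :
    t₁.ge 1 ≤ extensionProduct (t₁.ge 1 ⊓ t₂.le 0) (t₂.ge 1) := by
  intro B hB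
  obtain ⟨B', B'', hB', hB'', p, q, r, hT⟩ := t₂.exists_triangle_zero_one B
  refine ⟨B', B'', p, q, r, hT, ⟨?_, hB'⟩, hB''⟩
  -- `B''⟦-1⟧ ⟶ B' ⟶ B` is distinguished and both ends are `≥ 1` for `t₁`.
  have hB''₁ : t₁.ge 1 (B''⟦(-1 : ℤ)⟧) := t₁.ge_antitone one_le_two _
    (t₁.ge_shift 1 (-1) 2 (by lia) _ (ge_one_le_of_le_zero_le h _ hB''))
  exact (t₁.isGE₂ _ (inv_rot_of_distTriang _ hT) 1 ⟨hB''₁⟩ ⟨hB⟩).ge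

end CategoryTheory.Triangulated.TStructure

end

open TStructure in
/-- If `(U^{≤0}, U^{≥1})` is a t-structure on `H = D₁^{≥1} ∩ D₂^{≤0}`, then
`(D₁^{≤0} ∗ U^{≤0}, U^{≥1} ∗ D₂^{≥1})` satisfies the orthogonality and
decomposition axioms of a t-structure on `D`. -/
theorem stmt_6 (t₁ t₂ : TStructure C) (ht : t₁.le 0 ≤ t₂.le 0)
    (U₀ U₁ : C → Prop)
    (hU₀ : ∀ X, U₀ X → t₁.ge 1 X ∧ t₂.le 0 X)
    (hU₁ : ∀ X, U₁ X → t₁.ge 1 X ∧ t₂.le 0 X)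
    (horth : ∀ (A B : C) (f : A ⟶ B), U₀ A → U₁ B → f = 0)
    (hdec : ∀ (X : C), (t₁.ge 1 X ∧ t₂.le 0 X) →
      ∃ (Y Z : C) (_ : U₀ Y) (_ : U₁ Z)
        (f : Y ⟶ X) (g : X ⟶ Z) (h : Z ⟶ Y⟦(1 : ℤ)⟧),
        Triangle.mk f g h ∈ distTriang C) :
    (∀ (A B : C) (f : A ⟶ B),
        ExtStar (t₁.le 0) U₀ A → ExtStar U₁ (t₂.ge 1) B → f = 0) ∧
    (∀ (X : C), ∃ (R Q : C) (_ : ExtStar (t₁.le 0) U₀ R) (_ : ExtStar U₁ (t₂.ge 1) Q)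
      (f : R ⟶ X) (g : X ⟶ Q) (h : Q ⟶ R⟦(1 : ℤ)⟧),
      Triangle.mk f g h ∈ distTriang C) := by
  have hheart : t₁.ge 1 ⊓ t₂.le 0 ≤ extensionProduct U₀ U₁ := by
    rw [← extStar_eq_extensionProduct]
    exact hdec
  have hortho : extensionProduct (t₁.le 0) U₀ ≤
      (extensionProduct U₁ (t₂.ge 1)).leftOrthogonal :=
    extensionProduct_le_leftOrthogonal_extensionProduct
      (fun _ hA _ f hB ↦ t₁.zero' f hA (hU₁ _ hB).1)
      (fun _ hA _ f hB ↦ t₂.zero' f (ht _ hA) hB)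
      (fun _ hA _ f hB ↦ horth _ _ f hA hB)
      (fun _ hA _ f hB ↦ t₂.zero' f (hU₀ _ hA).2 hB)
  have hdecomp (X : C) :
      extensionProduct (extensionProduct (t₁.le 0) U₀) (extensionProduct U₁ (t₂.ge 1)) X := by
    rw [extensionProduct_assoc, ← extensionProduct_assoc U₀]
    refine monotone_extensionProduct_right _ ?_ X
      (by rw [extensionProduct_le_zero_ge_one_eq_top]; trivial)
    exact (ge_one_le_extensionProduct ht).trans
      (monotone_extensionProduct_left _ hheart)
  refine ⟨fun A B f hA hB ↦ ?_, fun X ↦ ?_⟩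
  · rw [extStar_eq_extensionProduct] at hA hB
    exact hortho A hA f hB
  · have := hdecomp X
    simp only [← extStar_eq_extensionProduct] at this
    exact this
end

section
/- Let D₁, D₂ be t-structures with D₁^{≤0} ⊆ D₂^{≤0}, H = D₁^{≥1} ∩ D₂^{≤0}, and let U^{≤0}, U^{≥1} ⊆ H satisfy Hom(U^{≤0}, U^{≥1}) = 0 and the decomposition property in H. Then U^{≤0} = (D₁^{≤0} ∗ U^{≤0}) ∩ H and U^{≥1} = (U^{≥1} ∗ D₂^{≥1}) ∩ H. -/
/-!
Let `X ∈ H` sit in a distinguished triangle `A → X → B → A⟦1⟧` with `A ∈ D₁^{≤0}` and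
`B ∈ U^{≤0} ⊆ D₁^{≥1}`. The map `A → X` vanishes, so `B → A⟦1⟧` has a section; that section
goes from `D₁^{≤-1}` to `D₁^{≥1}`, hence is zero, so `A = 0` and `X ≅ B ∈ U^{≤0}`.
Dually, if `A ∈ U^{≥1} ⊆ D₂^{≤0}` and `B ∈ D₂^{≥1}`, the map `X → B` vanishes, `B → A⟦1⟧`
has a retraction from `D₂^{≤-1}` to `D₂^{≥1}`, so `B = 0` and `X ≅ A ∈ U^{≥1}`.
-/

open CategoryTheory Limits Pretriangulated Triangulated ZeroObject

section

variable {C : Type*} [Category C] [Preadditive C] [HasZeroObject C] [HasShift C ℤ]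
  [∀ (n : ℤ), (CategoryTheory.shiftFunctor C n).Additive] [Pretriangulated C]

namespace CategoryTheory.Pretriangulated.Triangle

lemma isZero₁_of_mor₁_eq_zero {T : Triangle C} (hT : T ∈ distTriang C)
    (h₁ : T.mor₁ = 0) (h : ∀ s : T.obj₁⟦(1 : ℤ)⟧ ⟶ T.obj₃, s = 0) : IsZero T.obj₁ := by
  obtain ⟨s, hs⟩ := T.coyoneda_exact₁ hT (𝟙 _) (by rw [h₁, Functor.map_zero, comp_zero])
  have hshift : IsZero (T.obj₁⟦(1 : ℤ)⟧) := by
    rw [IsZero.iff_id_eq_zero, hs, h s, zero_comp]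
  exact (T.isZero₁_iff hT).2 ⟨h₁, hshift.eq_of_tgt _ _⟩

lemma isZero₃_of_mor₂_eq_zero {T : Triangle C} (hT : T ∈ distTriang C)
    (h₂ : T.mor₂ = 0) (h : ∀ r : T.obj₁⟦(1 : ℤ)⟧ ⟶ T.obj₃, r = 0) : IsZero T.obj₃ := by
  obtain ⟨r, hr⟩ := T.yoneda_exact₃ hT (𝟙 _) (by rw [h₂, zero_comp])
  rw [IsZero.iff_id_eq_zero, hr, h r, comp_zero]

end CategoryTheory.Pretriangulated.Triangle

namespace CategoryTheory.Triangulated.TStructure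

variable (t : TStructure C)

lemma isZero₁_of_distTriang {T : Triangle C} (hT : T ∈ distTriang C) (n : ℤ)
    (h₁ : t.le n T.obj₁) (h₂ : t.ge (n + 1) T.obj₂) (h₃ : t.ge n T.obj₃) : IsZero T.obj₁ :=
  T.isZero₁_of_mor₁_eq_zero hT (t.zero_of_isLE_of_isGE _ n (n + 1) (by omega) ⟨h₁⟩ ⟨h₂⟩)
    fun s => t.zero_of_isLE_of_isGE s (n - 1) n (by omega)
      ⟨t.le_shift n 1 (n - 1) (by omega) _ h₁⟩ ⟨h₃⟩

lemma isZero₃_of_distTriang {T : Triangle C} (hT : T ∈ distTriang C) (n : ℤ)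
    (h₁ : t.le (n + 1) T.obj₁) (h₂ : t.le n T.obj₂) (h₃ : t.ge (n + 1) T.obj₃) : IsZero T.obj₃ :=
  T.isZero₃_of_mor₂_eq_zero hT (t.zero_of_isLE_of_isGE _ n (n + 1) (by omega) ⟨h₂⟩ ⟨h₃⟩)
    fun r => t.zero_of_isLE_of_isGE r n (n + 1) (by omega)
      ⟨t.le_shift (n + 1) 1 n (by omega) _ h₁⟩ ⟨h₃⟩

end CategoryTheory.Triangulated.TStructure

end

variable {C : Type*} [Category C] [Preadditive C] [HasZeroObject C] [HasShift C ℤ]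
  [∀ (n : ℤ), (shiftFunctor C n).Additive] [Pretriangulated C] [IsTriangulated C]

theorem stmt_8_general (t₁ t₂ : TStructure C)
    (U₀ U₁ : C → Prop)
    (hU₀C : ObjectProperty.IsClosedUnderIsomorphisms U₀) (hU₁C : ObjectProperty.IsClosedUnderIsomorphisms U₁)
    (hU₀ : ∀ X, U₀ X → t₁.ge 1 X ∧ t₂.le 0 X)
    (hU₁ : ∀ X, U₁ X → t₁.ge 1 X ∧ t₂.le 0 X) :
    U₀ = (fun X => ExtStar (t₁.le 0) U₀ X ∧ (t₁.ge 1 X ∧ t₂.le 0 X)) ∧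
    U₁ = (fun X => ExtStar U₁ (t₂.ge 1) X ∧ (t₁.ge 1 X ∧ t₂.le 0 X)) := by
  refine ⟨funext fun X => propext ⟨fun hX => ?_, ?_⟩, funext fun X => propext ⟨fun hX => ?_, ?_⟩⟩
  · exact ⟨⟨0, X, t₁.le_of_isLE 0 0, hX, 0, 𝟙 X, 0, contractible_distinguished₁ X⟩, hU₀ X hX⟩
  · rintro ⟨⟨A, B, hA, hB, f, g, h, hT⟩, hX, -⟩
    have hA0 : IsZero A := t₁.isZero₁_of_distTriang hT 0 hA hX
      (t₁.ge_antitone zero_le_one _ (hU₀ B hB).1)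
    have : IsIso g := (Triangle.isZero₁_iff_isIso₂ _ hT).1 hA0
    exact ObjectProperty.prop_of_iso U₀ (asIso g).symm hB
  · exact ⟨⟨X, 0, hX, t₂.ge_of_isGE 0 1, 𝟙 X, 0, 0, contractible_distinguished X⟩, hU₁ X hX⟩
  · rintro ⟨⟨A, B, hA, hB, f, g, h, hT⟩, -, hX⟩
    have hB0 : IsZero B := t₂.isZero₃_of_distTriang hT 0
      (t₂.le_monotone zero_le_one _ (hU₁ A hA).2) hX hB
    have : IsIso f := (Triangle.isZero₃_iff_isIso₁ _ hT).1 hB0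
    exact ObjectProperty.prop_of_iso U₁ (asIso f) hA

/-- If `(U^{≤0}, U^{≥1})` is a t-structure on `H = D₁^{≥1} ∩ D₂^{≤0}`, then
`U^{≤0} = (D₁^{≤0} ∗ U^{≤0}) ∩ H` and `U^{≥1} = (U^{≥1} ∗ D₂^{≥1}) ∩ H`. -/
theorem stmt_8 (t₁ t₂ : TStructure C) (ht : t₁.le 0 ≤ t₂.le 0)
    (U₀ U₁ : C → Prop)
    (hU₀C : ObjectProperty.IsClosedUnderIsomorphisms U₀) (hU₁C : ObjectProperty.IsClosedUnderIsomorphisms U₁)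
    (hU₀ : ∀ X, U₀ X → t₁.ge 1 X ∧ t₂.le 0 X)
    (hU₁ : ∀ X, U₁ X → t₁.ge 1 X ∧ t₂.le 0 X)
    (horth : ∀ (A B : C) (f : A ⟶ B), U₀ A → U₁ B → f = 0)
    (hdec : ∀ (X : C), (t₁.ge 1 X ∧ t₂.le 0 X) →
      ∃ (Y Z : C) (_ : U₀ Y) (_ : U₁ Z)
        (f : Y ⟶ X) (g : X ⟶ Z) (h : Z ⟶ Y⟦(1 : ℤ)⟧),
        Triangle.mk f g h ∈ distTriang C) :
    U₀ = (fun X => ExtStar (t₁.le 0) U₀ X ∧ (t₁.ge 1 X ∧ t₂.le 0 X)) ∧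
    U₁ = (fun X => ExtStar U₁ (t₂.ge 1) X ∧ (t₁.ge 1 X ∧ t₂.le 0 X)) :=
  stmt_8_general t₁ t₂ U₀ U₁ hU₀C hU₁C hU₀ hU₁
end

section
/- Let D₁ be a t-structure on a triangulated category D with heart H₁. Torsion pairs (T, F) in H₁ are in bijection with t-structures D₂ on D satisfying D₁^{≤0} ⊆ D₂^{≤0} ⊆ D₁^{≤1}, via D₂^{≤0} = D₁^{≤0} ∗ Σ⁻¹T and D₂^{≥1} = Σ⁻¹F ∗ D₁^{≥2}. -/
/-!
For a torsion pair `(T, F)` in the heart `H₁`, put `P = D₁^{≤0} ∗ Σ⁻¹T` and `Q = Σ⁻¹F ∗ D₁^{≥2}`.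
Then `D₁^{≤0} ⊆ P ⊆ D₁^{≤1}` and `D₁^{≥2} ⊆ Q ⊆ D₁^{≥1}`, which makes `P` stable under `Σ` and
`Q` under `Σ⁻¹`; `Hom(P, Q) = 0` reduces to `Hom(T, F) = 0` and vanishing for degree reasons; and
every object lies in `P ∗ Q`, because `D₁^{≥1} ⊆ (Σ⁻¹T ∗ Σ⁻¹F) ∗ D₁^{≥2}` and `∗` is associative
by the octahedral axiom. So `P` is the aisle of a t-structure `D₂`, with coaisle `Q`.
Conversely, for `D₁^{≤0} ⊆ D₂^{≤0} ⊆ D₁^{≤1}`, the classes `H₁ ∩ D₂^{≤-1}` and `H₁ ∩ D₂^{≥0}`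
form a torsion pair, since the sandwich puts both ends of the `D₂`-truncation triangle of an
object of `H₁` into `H₁`. The constructions are mutually inverse because a t-structure is
determined by its aisle, and in a torsion pair each class is the orthogonal of the other in `H₁`.
-/

open CategoryTheory Category Limits Pretriangulated Triangulated

variable {C : Type*} [Category C] [Preadditive C] [HasZeroObject C] [HasShift C ℤ]
  [∀ (n : ℤ), (shiftFunctor C n).Additive] [Pretriangulated C] [IsTriangulated C]

/-- The heart of a t-structure, as a class of objects. -/
def heartProp (t : TStructure C) : C → Prop := fun X => t.le 0 X ∧ t.ge 0 X

/-- A torsion pair in the heart of `t`: two iso-closed classes of objects of the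
heart with `Hom(T,F) = 0` such that every object `M` of the heart sits in a
short exact sequence `0 → T_M → M → F_M → 0` (equivalently, a distinguished
triangle `T_M → M → F_M → T_M⟦1⟧`) with `T_M ∈ T`, `F_M ∈ F`. -/
def IsTorsionPair (t : TStructure C) (T F : C → Prop) : Prop :=
  (∀ X, T X → heartProp t X) ∧ (∀ X, F X → heartProp t X) ∧
  ObjectProperty.IsClosedUnderIsomorphisms T ∧ ObjectProperty.IsClosedUnderIsomorphisms F ∧
  (∀ (A B : C) (f : A ⟶ B), T A → F B → f = 0) ∧
  (∀ (M : C), heartProp t M →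
    ∃ (TM FM : C) (_ : T TM) (_ : F FM)
      (f : TM ⟶ M) (g : M ⟶ FM) (h : FM ⟶ TM⟦(1 : ℤ)⟧),
      Triangle.mk f g h ∈ distTriang C)

open ZeroObject

section Pretriangulated

omit [IsTriangulated C]

namespace ExtStar

variable {S S' T T' : ObjectProperty C}

lemma of_distTriang {Tr : Triangle C} (hTr : Tr ∈ distTriang C) (h₁ : S Tr.obj₁)
    (h₃ : T Tr.obj₃) : ExtStar S T Tr.obj₂ :=
  ⟨Tr.obj₁, Tr.obj₃, h₁, h₃, Tr.mor₁, Tr.mor₂, Tr.mor₃, hTr⟩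

lemma of_left {X : C} (hX : S X) (hT : T 0) : ExtStar S T X :=
  of_distTriang (contractible_distinguished X) hX hT

lemma of_right {X : C} (hS : S 0) (hX : T X) : ExtStar S T X :=
  of_distTriang (contractible_distinguished₁ X) hS hX

instance (S T : ObjectProperty C) : ObjectProperty.IsClosedUnderIsomorphisms (ExtStar S T) where
  of_iso e := by
    rintro ⟨A, B, hA, hB, f, g, h, hd⟩
    exact ⟨A, B, hA, hB, f ≫ e.hom, e.inv ≫ g, h, isomorphic_distinguished _ hd _
      (Triangle.isoMk _ _ (Iso.refl A) e.symm (Iso.refl B) (by simp [Triangle.mk])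
        (by simp [Triangle.mk]) (by simp [Triangle.mk]))⟩

lemma mono (hS : S ≤ S') (hT : T ≤ T') : ExtStar S T ≤ ExtStar S' T' :=
  fun _ ⟨A, B, hA, hB, f, g, h, hd⟩ => ⟨A, B, hS _ hA, hT _ hB, f, g, h, hd⟩

lemma of_shift [S.IsClosedUnderIsomorphisms] [T.IsClosedUnderIsomorphisms] {X : C} {a : ℤ}
    (hX : ExtStar S T (X⟦a⟧)) : ExtStar (S.shift a) (T.shift a) X := by
  obtain ⟨A, B, hA, hB, f, g, h, hd⟩ := hX
  exact ObjectProperty.prop_of_iso _ (shiftShiftNeg X a)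
    (of_distTriang (Triangle.shift_distinguished _ hd (-a))
      (S.prop_of_iso (shiftNegShift A a).symm hA) (T.prop_of_iso (shiftNegShift B a).symm hB))

end ExtStar

namespace CategoryTheory.Triangulated.TStructure

lemma ext_of_le_zero {t t' : TStructure C} (h : t.le 0 = t'.le 0) : t = t' := by
  have hle : t.le = t'.le := funext fun n => by
    rw [← t.shift_le n 0 n (add_zero n), ← t'.shift_le n 0 n (add_zero n), h]
  have hge : t.ge = t'.ge := funext fun n => by
    ext Y
    rw [t.ge_iff_isGE, t'.ge_iff_isGE, t.isGE_iff_orthogonal (n - 1) n (by omega),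
      t'.isGE_iff_orthogonal (n - 1) n (by omega)]
    simp only [← le_iff_isLE, hle]
  cases t
  cases t'
  cases hle
  cases hge
  rfl

lemma le_le_of_le_zero {t t' : TStructure C} {k n m : ℤ} (h : t.le 0 ≤ t'.le k)
    (hm : n + k = m) : t.le n ≤ t'.le m := by
  rw [← t.shift_le n 0 n (add_zero n), ← t'.shift_le n k m hm]
  exact fun X hX => h _ hX

lemma ge_le_ge_of_le_zero {t t' : TStructure C} {k n m : ℤ} (h : t.le 0 ≤ t'.le k)
    (hm : n + k = m) : t'.ge m ≤ t.ge n := by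
  intro Y hY
  rw [t.ge_iff_isGE, t.isGE_iff_orthogonal (n - 1) n (by omega)]
  intro X f hX
  exact t'.zero_of_isLE_of_isGE f (n - 1 + k) m (by omega)
    ⟨le_le_of_le_zero h rfl _ hX.le⟩ ⟨hY⟩

variable (t : TStructure C)

lemma ge_le_extStar (n₀ n₁ : ℤ) (h : n₀ + 1 = n₁) :
    t.ge n₀ ≤ ExtStar (t.le n₀ ⊓ t.ge n₀) (t.ge n₁) := by
  intro Y hY
  obtain ⟨A, B, hA, hB, f, g, k, hd⟩ := t.exists_triangle Y n₀ n₁ h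
  have hB' : t.ge n₀ (B⟦(-1 : ℤ)⟧) :=
    t.ge_antitone (by omega) _ (t.ge_shift n₁ (-1) (n₁ + 1) (by omega) B hB)
  exact ⟨A, B, ⟨hA, (t.isGE₂ _ (inv_rot_of_distTriang _ hd) n₀ ⟨hB'⟩ ⟨hY⟩).ge⟩, hB, f, g, k, hd⟩

def ofAisle (P Q : ObjectProperty C) [P.IsClosedUnderIsomorphisms] [Q.IsClosedUnderIsomorphisms]
    (hom_eq_zero : ∀ ⦃X Y : C⦄, P X → Q Y → ∀ f : X ⟶ Y, f = 0)
    (le_shift_one : P ≤ P.shift (1 : ℤ)) (le_shift_neg_one : Q ≤ Q.shift (-1 : ℤ))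
    (extStar : ∀ X, ExtStar P Q X) : TStructure C where
  le n := P.shift n
  ge n := Q.shift (n - 1)
  le_shift n a n' h X hX := by
    change (P.shift n').shift a X
    rwa [P.shift_shift a n' n h]
  ge_shift n a n' h X hX := by
    change (Q.shift (n' - 1)).shift a X
    rwa [Q.shift_shift a (n' - 1) (n - 1) (by omega)]
  zero' X Y f hX hY := by
    rw [P.shift_zero] at hX
    rw [sub_self, Q.shift_zero] at hY
    exact hom_eq_zero hX hY f
  le_zero_le := by
    rw [P.shift_zero]
    exact le_shift_one
  ge_one_le := by
    rw [sub_self, Q.shift_zero, zero_sub]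
    exact le_shift_neg_one
  exists_triangle_zero_one X := by
    change ExtStar (P.shift 0) (Q.shift (1 - 1)) X
    rw [P.shift_zero, sub_self, Q.shift_zero]
    exact extStar X

section ofAisle

variable {P Q : ObjectProperty C} [P.IsClosedUnderIsomorphisms] [Q.IsClosedUnderIsomorphisms]
  {hom_eq_zero : ∀ ⦃X Y : C⦄, P X → Q Y → ∀ f : X ⟶ Y, f = 0}
  {le_shift_one : P ≤ P.shift (1 : ℤ)} {le_shift_neg_one : Q ≤ Q.shift (-1 : ℤ)}
  {extStar : ∀ X, ExtStar P Q X}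

lemma ofAisle_le_zero :
    (ofAisle P Q hom_eq_zero le_shift_one le_shift_neg_one extStar).le 0 = P :=
  P.shift_zero ℤ

lemma ofAisle_ge_one :
    (ofAisle P Q hom_eq_zero le_shift_one le_shift_neg_one extStar).ge 1 = Q := by
  change Q.shift (1 - 1) = Q
  rw [sub_self, Q.shift_zero]

end ofAisle

-- `T.shift 1` holds at `X` iff `X⟦1⟧ ∈ T`, i.e. it is the class `Σ⁻¹T`.
abbrev tiltLE (t : TStructure C) (T : ObjectProperty C) : ObjectProperty C :=
  ExtStar (t.le 0) (T.shift (1 : ℤ))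

abbrev tiltGE (t : TStructure C) (F : ObjectProperty C) : ObjectProperty C :=
  ExtStar (F.shift (1 : ℤ)) (t.ge 2)

end CategoryTheory.Triangulated.TStructure

namespace IsTorsionPair

variable {t : TStructure C} {T F : ObjectProperty C} (h : IsTorsionPair t T F)
include h

lemma heartProp_of_torsion {M : C} (hM : T M) : heartProp t M := h.1 M hM

lemma heartProp_of_torsionFree {N : C} (hN : F N) : heartProp t N := h.2.1 N hN

lemma isClosedUnderIsomorphisms_torsion : T.IsClosedUnderIsomorphisms := h.2.2.1

lemma isClosedUnderIsomorphisms_torsionFree : F.IsClosedUnderIsomorphisms := h.2.2.2.1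

lemma hom_eq_zero {M N : C} (f : M ⟶ N) (hM : T M) (hN : F N) : f = 0 := h.2.2.2.2.1 M N f hM hN

lemma extStar {M : C} (hM : heartProp t M) : ExtStar T F M := h.2.2.2.2.2 M hM

lemma torsion_and_torsionFree_of_isZero {X : C} (hX : IsZero X) : T X ∧ F X := by
  have := h.isClosedUnderIsomorphisms_torsion
  have := h.isClosedUnderIsomorphisms_torsionFree
  obtain ⟨TX, FX, hTX, hFX, u, v, w, hd⟩ :=
    h.extStar ⟨(t.isLE_of_isZero hX 0).le, (t.isGE_of_isZero hX 0).ge⟩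
  have : IsIso w := (Triangle.isZero₂_iff_isIso₃ _ hd).1 hX
  -- `FX ≅ TX⟦1⟧` is both `≥ 0` and `≤ -1`
  have : t.IsLE (TX⟦(1 : ℤ)⟧) (-1) :=
    ⟨t.le_shift 0 1 (-1) (by omega) _ (h.heartProp_of_torsion hTX).1⟩
  have : t.IsGE FX 0 := ⟨(h.heartProp_of_torsionFree hFX).2⟩
  have : t.IsGE (TX⟦(1 : ℤ)⟧) 0 := t.isGE_of_iso (asIso w) 0
  have hTX₁ : IsZero (TX⟦(1 : ℤ)⟧) := t.isZero _ (-1) 0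
  have hTX₀ : IsZero TX :=
    ((shiftFunctor C (-1 : ℤ)).map_isZero hTX₁).of_iso (shiftShiftNeg TX (1 : ℤ)).symm
  exact ⟨T.prop_of_iso (hTX₀.iso hX) hTX, F.prop_of_iso ((hTX₁.of_iso (asIso w)).iso hX) hFX⟩

lemma torsion_of_forall_hom_eq_zero {M : C} (hM : heartProp t M)
    (hMF : ∀ N, F N → ∀ f : M ⟶ N, f = 0) : T M := by
  have := h.isClosedUnderIsomorphisms_torsion
  obtain ⟨TM, FM, hTM, hFM, u, v, w, hd⟩ := h.extStar hM
  -- `v = 0` makes `w` a split mono, and its retraction `TM⟦1⟧ ⟶ FM` vanishes for degree reasons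
  obtain ⟨r, hr⟩ := Triangle.yoneda_exact₂ _ (rot_of_distTriang _ hd) (𝟙 FM)
    ((comp_id _).trans (hMF FM hFM v))
  have hr₀ : r = 0 := t.zero_of_isLE_of_isGE r (-1) 0 (by omega)
    ⟨t.le_shift 0 1 (-1) (by omega) _ (h.heartProp_of_torsion hTM).1⟩
    ⟨(h.heartProp_of_torsionFree hFM).2⟩
  have hFM₀ : IsZero FM := by
    rw [IsZero.iff_id_eq_zero, hr, hr₀, comp_zero]; rfl
  have : IsIso u := (Triangle.isZero₃_iff_isIso₁ _ hd).1 hFM₀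
  exact T.prop_of_isIso u hTM

lemma torsionFree_of_forall_hom_eq_zero {N : C} (hN : heartProp t N)
    (hTN : ∀ M, T M → ∀ f : M ⟶ N, f = 0) : F N := by
  have := h.isClosedUnderIsomorphisms_torsionFree
  obtain ⟨TN, FN, hTN', hFN, u, v, w, hd⟩ := h.extStar hN
  obtain ⟨r, hr⟩ := Triangle.coyoneda_exact₂ _ (inv_rot_of_distTriang _ hd) (𝟙 TN)
    ((id_comp _).trans (hTN TN hTN' u))
  have hr₀ : r = 0 := t.zero_of_isLE_of_isGE r 0 1 (by omega)
    ⟨(h.heartProp_of_torsion hTN').1⟩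
    ⟨t.ge_shift 0 (-1) 1 (by omega) _ (h.heartProp_of_torsionFree hFN).2⟩
  have hTN₀ : IsZero TN := by
    rw [IsZero.iff_id_eq_zero, hr, hr₀, zero_comp]; rfl
  have : IsIso v := (Triangle.isZero₁_iff_isIso₂ _ hd).1 hTN₀
  exact F.prop_of_iso (asIso v).symm hFN

lemma le_zero_le_tiltLE : t.le 0 ≤ t.tiltLE T := fun _ hX =>
  ExtStar.of_left hX
    (h.torsion_and_torsionFree_of_isZero ((shiftFunctor C (1 : ℤ)).map_isZero (isZero_zero C))).1

lemma ge_two_le_tiltGE : t.ge 2 ≤ t.tiltGE F := fun _ hX =>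
  ExtStar.of_right
    (h.torsion_and_torsionFree_of_isZero ((shiftFunctor C (1 : ℤ)).map_isZero (isZero_zero C))).2 hX

lemma tiltLE_le_le_one : t.tiltLE T ≤ t.le 1 := by
  rintro X ⟨A, B, hA, hB, f, g, k, hd⟩
  have : t.IsLE (B⟦(1 : ℤ)⟧) 0 := ⟨(h.heartProp_of_torsion hB).1⟩
  exact (t.isLE₂ _ hd 1 ⟨t.le_monotone (by omega) _ hA⟩ (t.isLE_of_shift B 1 1 0)).le

lemma tiltGE_le_ge_one : t.tiltGE F ≤ t.ge 1 := by
  rintro X ⟨A, B, hA, hB, f, g, k, hd⟩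
  have : t.IsGE (A⟦(1 : ℤ)⟧) 0 := ⟨(h.heartProp_of_torsionFree hA).2⟩
  exact (t.isGE₂ _ hd 1 (t.isGE_of_shift A 1 1 0) ⟨t.ge_antitone (by omega) _ hB⟩).ge

lemma tiltLE_shift_neg_one {M : C} (hM : T M) : t.tiltLE T (M⟦(-1 : ℤ)⟧) := by
  have := h.isClosedUnderIsomorphisms_torsion
  exact ExtStar.of_right (t.le_of_isLE 0 0) (T.prop_of_iso (shiftNegShift M (1 : ℤ)).symm hM)

lemma tiltGE_shift_neg_one {N : C} (hN : F N) : t.tiltGE F (N⟦(-1 : ℤ)⟧) := by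
  have := h.isClosedUnderIsomorphisms_torsionFree
  exact ExtStar.of_left (F.prop_of_iso (shiftNegShift N (1 : ℤ)).symm hN) (t.ge_of_isGE 0 2)

lemma hom_eq_zero_of_tiltLE_of_tiltGE {X Y : C} (hX : t.tiltLE T X) (hY : t.tiltGE F Y)
    (f : X ⟶ Y) : f = 0 := by
  have hY₁ : t.IsGE Y 1 := ⟨h.tiltGE_le_ge_one _ hY⟩
  obtain ⟨A, B, hA, hB, a, b, c, hdX⟩ := hX
  obtain ⟨A', B', hA', hB', a', b', c', hdY⟩ := hY
  have : t.IsLE (B⟦(1 : ℤ)⟧) 0 := ⟨(h.heartProp_of_torsion hB).1⟩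
  -- a map `B ⟶ Y` factors through `A'`, and `B ⟶ A'` is a map from `T` to `F` after shifting by 1
  have hBY : ∀ g : B ⟶ Y, g = 0 := fun g => by
    obtain ⟨φ, rfl⟩ := Triangle.coyoneda_exact₂ _ hdY g
      (t.zero_of_isLE_of_isGE _ 1 2 (by omega) (t.isLE_of_shift B 1 1 0) ⟨hB'⟩)
    rw [(shiftFunctor C (1 : ℤ)).map_eq_zero_iff.1 (h.hom_eq_zero (φ⟦(1 : ℤ)⟧') hB hA')]
    exact zero_comp
  obtain ⟨ψ, rfl⟩ := Triangle.yoneda_exact₂ _ hdX f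
    (t.zero_of_isLE_of_isGE _ 0 1 (by omega) ⟨hA⟩ hY₁)
  rw [hBY ψ]
  exact comp_zero

end IsTorsionPair

instance (t : TStructure C) : ObjectProperty.IsClosedUnderIsomorphisms (heartProp t) :=
  inferInstanceAs (ObjectProperty.IsClosedUnderIsomorphisms (t.le 0 ⊓ t.ge 0))

namespace CategoryTheory.Triangulated.TStructure

abbrev torsionOf (t t₂ : TStructure C) : ObjectProperty C := heartProp t ⊓ t₂.le (-1)

abbrev torsionFreeOf (t t₂ : TStructure C) : ObjectProperty C := heartProp t ⊓ t₂.ge 0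

variable {t t₂ : TStructure C} (hs₁ : t.le 0 ≤ t₂.le 0) (hs₂ : t₂.le 0 ≤ t.le 1)
include hs₁ hs₂

lemma isTorsionPair_torsionOf : IsTorsionPair t (t.torsionOf t₂) (t.torsionFreeOf t₂) := by
  refine ⟨fun _ hM => hM.1, fun _ hN => hN.1, inferInstance, inferInstance,
    fun _ _ f hM hN => t₂.zero_of_isLE_of_isGE f (-1) 0 (by omega) ⟨hM.2⟩ ⟨hN.2⟩, fun M hM => ?_⟩
  obtain ⟨A, B, hA, hB, f, g, k, hd⟩ := t₂.exists_triangle M (-1) 0 (by omega)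
  have hA₀ : t.le 0 A := le_le_of_le_zero hs₂ (by omega) _ hA
  have hB₀ : t.ge 0 B := ge_le_ge_of_le_zero hs₁ (by omega) _ hB
  have hB₁ : t.ge 0 (B⟦(-1 : ℤ)⟧) :=
    t.ge_antitone (by omega) _ (t.ge_shift 0 (-1) 1 (by omega) B hB₀)
  have hA₁ : t.le 0 (A⟦(1 : ℤ)⟧) :=
    t.le_monotone (by omega) _ (t.le_shift 0 1 (-1) (by omega) A hA₀)
  refine ⟨A, B, ⟨⟨hA₀, ?_⟩, hA⟩, ⟨⟨?_, hB₀⟩, hB⟩, f, g, k, hd⟩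
  · exact (t.isGE₂ _ (inv_rot_of_distTriang _ hd) 0 ⟨hB₁⟩ ⟨hM.2⟩).ge
  · exact (t.isLE₂ _ (rot_of_distTriang _ hd) 0 ⟨hM.1⟩ ⟨hA₁⟩).le

lemma tiltLE_torsionOf : t.tiltLE (t.torsionOf t₂) = t₂.le 0 := by
  ext X
  constructor
  · rintro ⟨A, B, hA, ⟨-, hB⟩, f, g, k, hd⟩
    have : t₂.IsLE (B⟦(1 : ℤ)⟧) (-1) := ⟨hB⟩
    exact (t₂.isLE₂ _ hd 0 ⟨hs₁ _ hA⟩ (t₂.isLE_of_shift B 0 1 (-1))).le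
  · intro hX
    obtain ⟨A, Y, hA, hY, f, g, k, hd⟩ := t.exists_triangle X 0 1 rfl
    have hA₁ : t₂.le 0 (A⟦(1 : ℤ)⟧) :=
      hs₁ _ (t.le_monotone (by omega) _ (t.le_shift 0 1 (-1) (by omega) A hA))
    have hY₂ : t₂.le 0 Y := (t₂.isLE₂ _ (rot_of_distTriang _ hd) 0 ⟨hX⟩ ⟨hA₁⟩).le
    exact ⟨A, Y, hA, ⟨⟨t.le_shift 1 1 0 (by omega) Y (hs₂ _ hY₂),
      t.ge_shift 1 1 0 (by omega) Y hY⟩, t₂.le_shift 0 1 (-1) (by omega) Y hY₂⟩, f, g, k, hd⟩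

end CategoryTheory.Triangulated.TStructure

end Pretriangulated

lemma ExtStar.assoc (S T U : ObjectProperty C) :
    ExtStar (ExtStar S T) U = ExtStar S (ExtStar T U) := by
  ext X
  constructor
  · rintro ⟨Y, U₀, ⟨S₀, T₀, hS₀, hT₀, a, b, c, hY⟩, hU₀, f, g, h, hX⟩
    obtain ⟨W, v, w, hW⟩ := distinguished_cocone_triangle (a ≫ f)
    exact ⟨S₀, W, hS₀, ⟨T₀, U₀, hT₀, hU₀, _, _, _, (someOctahedron rfl hY hX hW).mem⟩, _, _, _, hW⟩
  · rintro ⟨S₀, Z, hS₀, ⟨T₀, U₀, hT₀, hU₀, a, b, c, hZ⟩, f, g, h, hX⟩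
    obtain ⟨W, v, w, hW⟩ := distinguished_cocone_triangle₁ (g ≫ b)
    exact ⟨W, U₀, ⟨S₀, T₀, hS₀, hT₀, _, _, _, (someOctahedron' rfl hX hZ hW).mem⟩, hU₀, _, _, _, hW⟩

namespace IsTorsionPair

variable {t : TStructure C} {T F : ObjectProperty C} (h : IsTorsionPair t T F)
include h

lemma extStar_tiltLE_tiltGE (X : C) : ExtStar (t.tiltLE T) (t.tiltGE F) X := by
  have := h.isClosedUnderIsomorphisms_torsion
  have := h.isClosedUnderIsomorphisms_torsionFree
  have hge : t.ge 1 ≤ ExtStar (ExtStar (T.shift (1 : ℤ)) (F.shift (1 : ℤ))) (t.ge 2) :=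
    (t.ge_le_extStar 1 2 rfl).trans <| ExtStar.mono (fun Y hY => ExtStar.of_shift
      (h.extStar ⟨t.le_shift 1 1 0 (by omega) Y hY.1, t.ge_shift 1 1 0 (by omega) Y hY.2⟩)) le_rfl
  have hX := ExtStar.mono le_rfl hge X (t.exists_triangle X 0 1 rfl)
  rwa [ExtStar.assoc, ← ExtStar.assoc] at hX

def tilt : TStructure C :=
  TStructure.ofAisle (t.tiltLE T) (t.tiltGE F) (fun _ _ => h.hom_eq_zero_of_tiltLE_of_tiltGE)
    (fun X hX => h.le_zero_le_tiltLE _ (t.le_shift 1 1 0 (by omega) X (h.tiltLE_le_le_one X hX)))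
    (fun X hX => h.ge_two_le_tiltGE _ (t.ge_shift 1 (-1) 2 (by omega) X (h.tiltGE_le_ge_one X hX)))
    h.extStar_tiltLE_tiltGE

lemma tilt_le_zero : h.tilt.le 0 = t.tiltLE T := TStructure.ofAisle_le_zero

lemma tilt_ge_one : h.tilt.ge 1 = t.tiltGE F := TStructure.ofAisle_ge_one

lemma torsionOf_tilt : t.torsionOf h.tilt = T := by
  ext M
  refine ⟨fun ⟨hM, hM'⟩ => h.torsion_of_forall_hom_eq_zero hM fun N hN f => ?_,
    fun hM => ⟨h.heartProp_of_torsion hM, h.tiltLE_shift_neg_one hM⟩⟩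
  exact (shiftFunctor C (-1 : ℤ)).map_eq_zero_iff.1
    (h.hom_eq_zero_of_tiltLE_of_tiltGE hM' (h.tiltGE_shift_neg_one hN) _)

lemma torsionFreeOf_tilt : t.torsionFreeOf h.tilt = F := by
  ext N
  refine ⟨fun ⟨hN, hN'⟩ => h.torsionFree_of_forall_hom_eq_zero hN fun M hM f => ?_,
    fun hN => ⟨h.heartProp_of_torsionFree hN, h.tiltGE_shift_neg_one hN⟩⟩
  exact (shiftFunctor C (-1 : ℤ)).map_eq_zero_iff.1
    (h.hom_eq_zero_of_tiltLE_of_tiltGE (h.tiltLE_shift_neg_one hM) hN' _)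

end IsTorsionPair

namespace CategoryTheory.Triangulated.TStructure

lemma tilt_isTorsionPair_torsionOf {t t₂ : TStructure C} (hs₁ : t.le 0 ≤ t₂.le 0)
    (hs₂ : t₂.le 0 ≤ t.le 1) : (isTorsionPair_torsionOf hs₁ hs₂).tilt = t₂ :=
  ext_of_le_zero (by rw [IsTorsionPair.tilt_le_zero, tiltLE_torsionOf hs₁ hs₂])

def tiltEquiv (t : TStructure C) :
    {TF : ObjectProperty C × ObjectProperty C // IsTorsionPair t TF.1 TF.2} ≃
      {t₂ : TStructure C // t.le 0 ≤ t₂.le 0 ∧ t₂.le 0 ≤ t.le 1} where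
  toFun p := ⟨p.2.tilt, by
    rw [IsTorsionPair.tilt_le_zero]
    exact ⟨p.2.le_zero_le_tiltLE, p.2.tiltLE_le_le_one⟩⟩
  invFun t₂ := ⟨(t.torsionOf t₂, t.torsionFreeOf t₂), isTorsionPair_torsionOf t₂.2.1 t₂.2.2⟩
  left_inv p := Subtype.ext (Prod.ext p.2.torsionOf_tilt p.2.torsionFreeOf_tilt)
  right_inv t₂ := Subtype.ext (tilt_isTorsionPair_torsionOf t₂.2.1 t₂.2.2)

end CategoryTheory.Triangulated.TStructure

/-- Torsion pairs in the heart of `t₁` are in bijection with the t-structures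
`t₂` with `D₁^{≤0} ⊆ D₂^{≤0} ⊆ D₁^{≤1}`, via
`D₂^{≤0} = D₁^{≤0} ∗ Σ⁻¹T` and `D₂^{≥1} = Σ⁻¹F ∗ D₁^{≥2}`. -/
theorem stmt_9 (t₁ : TStructure C) :
    ∃ e : {TF : (C → Prop) × (C → Prop) // IsTorsionPair t₁ TF.1 TF.2} ≃
        {t₂ : TStructure C // t₁.le 0 ≤ t₂.le 0 ∧ t₂.le 0 ≤ t₁.le 1},
      ∀ p, ((e p : TStructure C)).le 0 =
            ExtStar (t₁.le 0) (fun X => (p : (C → Prop) × (C → Prop)).1 (X⟦(1 : ℤ)⟧)) ∧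
          ((e p : TStructure C)).ge 1 =
            ExtStar (fun X => (p : (C → Prop) × (C → Prop)).2 (X⟦(1 : ℤ)⟧)) (t₁.ge 2) :=
  ⟨t₁.tiltEquiv, fun p => ⟨p.2.tilt_le_zero, p.2.tilt_ge_one⟩⟩
end

section
/- Let D₁, D₂ be t-structures with D₁^{≤n₁} ⊆ D₂^{≤0} ⊆ D₁^{≤n₂} (n₁ ≤ n₂), with neither stable, and set U^{≤0} = D₁^{[n₁,n₂]} ∩ D₂^{≤0} and U^{≥1} = D₂^{≥1} ∩ D₁^{[n₁,n₂]}. Suppose a ∈ {n₁,…,n₂} is the largest integer such that Σ^{-j}(H₁) ⊆ U^{≤0} for all n₁+1 ≤ j ≤ a, and b is the smallest integer such that Σ^{-j}(H₁) ⊆ U^{≥1} for all b ≤ j ≤ n₂ (setting a = n₁, b = n₂+1 when no such integers exist). Then d(D₁, D₂) = b − a − 1 and D₁^{≤a} ⊆ D₂^{≤0} ⊆ D₁^{≤b−1}. -/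
open CategoryTheory Category Limits Pretriangulated Triangulated

variable {C : Type*} [Category C] [Preadditive C] [HasZeroObject C] [HasShift C ℤ]
  [∀ (n : ℤ), (shiftFunctor C n).Additive] [Pretriangulated C]

/-- `Σ^{-j} H`, the shifted heart: objects `X` with `X⟦j⟧` in the heart. -/
def shiftedHeart (t : TStructure C) (j : ℤ) : C → Prop :=
  fun X => heartProp t (X⟦j⟧)

/-- The distance between two t-structures: the smallest natural number `d` such
that `D₁^{≤m} ⊆ D₂^{≤0} ⊆ D₁^{≤m+d}` for some integer `m`, and `⊤` if no such
`d` exists. -/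
noncomputable def tDist (t₁ t₂ : TStructure C) : ℕ∞ :=
  sInf {d : ℕ∞ | ∃ (k : ℕ) (m : ℤ), d = k ∧
    t₁.le m ≤ t₂.le 0 ∧ t₂.le 0 ≤ t₁.le (m + k)}


section Aux

variable (t : TStructure C)

lemma aux_zero {X Y : C} (f : X ⟶ Y) (n m : ℤ) (h : n < m)
    (hX : t.le n X) (hY : t.ge m Y) : f = 0 := by
  have hX' : t.le 0 (X⟦n⟧) := t.le_shift n n 0 (by omega) X hX
  have hY' : t.ge 1 (Y⟦n⟧) := t.ge_antitone (by omega : (1 : ℤ) ≤ m - n) _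
    (t.ge_shift m n (m - n) (by omega) Y hY)
  have hz : (shiftFunctor C n).map f = 0 := t.zero' _ hX' hY'
  exact (shiftFunctor C n).map_eq_zero_iff.mp hz

lemma aux_shiftedHeart_iff (j : ℤ) (X : C) :
    shiftedHeart t j X ↔ t.le j X ∧ t.ge j X := by
  constructor
  · rintro ⟨h1, h2⟩
    constructor
    · rw [← t.shift_le j 0 j (add_zero j)]; exact h1
    · rw [← t.shift_ge j 0 j (add_zero j)]; exact h2
  · rintro ⟨h1, h2⟩
    exact ⟨t.le_shift j j 0 (by omega) X h1, t.ge_shift j j 0 (by omega) X h2⟩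

lemma aux_le_of_orth (n : ℤ) (X : C)
    (h : ∀ Y : C, t.ge (n + 1) Y → ∀ f : X ⟶ Y, f = 0) : t.le n X := by
  obtain ⟨A, B, hA, hB, f, g, w, hT⟩ := t.exists_triangle X n (n + 1) rfl
  have hg : g = 0 := h B hB g
  obtain ⟨r, hr⟩ := Triangle.yoneda_exact₃ _ hT (𝟙 B) (by simp [hg]; exact zero_comp)
  have hr0 : r = 0 := aux_zero t r (n - 1) (n + 1) (by omega)
    (t.le_shift n 1 (n - 1) (by omega) A hA) hB
  have hzB : IsZero B := by rw [IsZero.iff_id_eq_zero, hr, hr0, comp_zero]; rfl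
  have : IsIso f := (Triangle.isZero₃_iff_isIso₁ _ hT).1 hzB
  exact (t.le n).prop_of_iso (asIso f) hA

lemma aux_le_ext (n : ℤ) (T : Triangle C) (hT : T ∈ distTriang C)
    (h₁ : t.le n T.obj₁) (h₃ : t.le n T.obj₃) : t.le n T.obj₂ := by
  apply aux_le_of_orth
  intro Y hY f
  have h1 : T.mor₁ ≫ f = 0 := aux_zero t _ n (n + 1) (by omega) h₁ hY
  obtain ⟨g, hg⟩ := Triangle.yoneda_exact₂ _ hT f h1
  rw [hg, aux_zero t g n (n + 1) (by omega) h₃ hY, comp_zero]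

lemma aux_ge_of_orth (X : C)
    (h : ∀ W : C, t.le 0 W → ∀ f : W ⟶ X, f = 0) : t.ge 1 X := by
  obtain ⟨A, B, hA, hB, f, g, w, hT⟩ := t.exists_triangle X 0 1 rfl
  have hf : f = 0 := h A hA f
  obtain ⟨s, hs⟩ := Triangle.coyoneda_exact₂ _ (inv_rot_of_distTriang _ hT) (𝟙 A)
    (by simp [hf]; exact comp_zero)
  have hs0 : s = 0 := aux_zero t s 0 2 (by omega) hA
    (t.ge_shift 1 (-1) 2 (by omega) B hB)
  have hzA : IsZero A := by rw [IsZero.iff_id_eq_zero, hs, hs0, zero_comp]; rfl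
  have : IsIso g := (Triangle.isZero₁_iff_isIso₂ _ hT).1 hzA
  exact (t.ge 1).prop_of_iso (asIso g).symm hB

lemma aux_stable (n : ℤ) (h : t.le (n + 1) ≤ t.le n) :
    t.le (-1) = t.le 0 := by
  funext X
  refine propext ⟨fun h' => t.le_monotone (by omega) _ h', fun hX => ?_⟩
  have e1 : t.le 0 = (t.le (n + 1)).shift (-1 - n) :=
    (t.shift_le (-1 - n) (n + 1) 0 (by omega)).symm
  have e2 : t.le (-1) = (t.le n).shift (-1 - n) :=
    (t.shift_le (-1 - n) n (-1) (by omega)).symm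
  rw [e1] at hX
  rw [e2]
  exact h _ hX

lemma step_up (t₁ t₂ : TStructure C) (c c' : ℤ) (hcc : c + 1 = c')
    (hc : t₁.le c ≤ t₂.le 0)
    (hh : ∀ X, t₁.le c' X → t₁.ge c' X → t₂.le 0 X) :
    t₁.le c' ≤ t₂.le 0 := by
  intro X hX
  obtain ⟨A, B, hA, hB, f, g, w, hT⟩ := t₁.exists_triangle X c c' hcc
  have hBle : t₁.le c' B := aux_le_ext t₁ c' _ (rot_of_distTriang _ hT) hX
    (t₁.le_monotone (by omega : c - 1 ≤ c') _ (t₁.le_shift c 1 (c - 1) (by omega) A hA))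
  have hB2 : t₂.le 0 B := hh B hBle hB
  exact aux_le_ext t₂ 0 _ hT (hc A hA) hB2

lemma step_down (t₁ t₂ : TStructure C) (c c' : ℤ) (hcc : c + 1 = c')
    (hc : t₂.le 0 ≤ t₁.le c')
    (hh : ∀ X, t₁.le c' X → t₁.ge c' X → t₂.ge 1 X) :
    t₂.le 0 ≤ t₁.le c := by
  intro X hX2
  have hX1 : t₁.le c' X := hc X hX2
  obtain ⟨A, B, hA, hB, f, g, w, hT⟩ := t₁.exists_triangle X c c' hcc
  have hBle : t₁.le c' B := aux_le_ext t₁ c' _ (rot_of_distTriang _ hT) hX1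
    (t₁.le_monotone (by omega : c - 1 ≤ c') _ (t₁.le_shift c 1 (c - 1) (by omega) A hA))
  have hB2 : t₂.ge 1 B := hh B hBle hB
  have hg : g = 0 := aux_zero t₂ g 0 1 (by omega) hX2 hB2
  obtain ⟨r, hr⟩ := Triangle.yoneda_exact₃ _ hT (𝟙 B) (by simp [hg]; exact zero_comp)
  have hr0 : r = 0 := aux_zero t₁ r (c - 1) c' (by omega)
    (t₁.le_shift c 1 (c - 1) (by omega) A hA) hB
  have hzB : IsZero B := by rw [IsZero.iff_id_eq_zero, hr, hr0, comp_zero]; rfl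
  have : IsIso f := (Triangle.isZero₃_iff_isIso₁ _ hT).1 hzB
  exact (t₁.le c).prop_of_iso (asIso f) hA

end Aux

/-- Determination of the distance: with `U^{≤0} = D₁^{[n₁,n₂]} ∩ D₂^{≤0}` and
`U^{≥1} = D₂^{≥1} ∩ D₁^{[n₁,n₂]}`, if `a` is the largest element of
`{n₁+1,…,n₂}` such that `Σ^{-j}H₁ ⊆ U^{≤0}` for all `n₁+1 ≤ j ≤ a` (with
`a = n₁` if there is none) and `b` is the smallest element of `{n₁+1,…,n₂}`
such that `Σ^{-j}H₁ ⊆ U^{≥1}` for all `b ≤ j ≤ n₂` (with `b = n₂+1` if there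
is none), then `d(D₁,D₂) = b - a - 1` and `D₁^{≤a} ⊆ D₂^{≤0} ⊆ D₁^{≤b-1}`. -/
theorem stmt_17 (t₁ t₂ : TStructure C)
    (hstable₁ : t₁.le (-1) ≠ t₁.le 0) (hstable₂ : t₂.le (-1) ≠ t₂.le 0)
    (n₁ n₂ : ℤ) (hn : n₁ ≤ n₂)
    (hlow : t₁.le n₁ ≤ t₂.le 0) (hhigh : t₂.le 0 ≤ t₁.le n₂)
    (U₀ U₁ : C → Prop)
    (hU₀ : U₀ = fun X => (t₁.ge n₁ X ∧ t₁.le n₂ X) ∧ t₂.le 0 X)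
    (hU₁ : U₁ = fun X => t₂.ge 1 X ∧ (t₁.ge n₁ X ∧ t₁.le n₂ X))
    (a b : ℤ)
    (ha : (n₁ + 1 ≤ a ∧ a ≤ n₂ ∧
            (∀ j, n₁ + 1 ≤ j → j ≤ a → ∀ X, shiftedHeart t₁ j X → U₀ X) ∧
            (∀ i, n₁ + 1 ≤ i → i ≤ n₂ →
              (∀ j, n₁ + 1 ≤ j → j ≤ i → ∀ X, shiftedHeart t₁ j X → U₀ X) → i ≤ a)) ∨
          (a = n₁ ∧ ¬ ∃ i, n₁ + 1 ≤ i ∧ i ≤ n₂ ∧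
            ∀ j, n₁ + 1 ≤ j → j ≤ i → ∀ X, shiftedHeart t₁ j X → U₀ X))
    (hb : (n₁ + 1 ≤ b ∧ b ≤ n₂ ∧
            (∀ j, b ≤ j → j ≤ n₂ → ∀ X, shiftedHeart t₁ j X → U₁ X) ∧
            (∀ i, n₁ + 1 ≤ i → i ≤ n₂ →
              (∀ j, i ≤ j → j ≤ n₂ → ∀ X, shiftedHeart t₁ j X → U₁ X) → b ≤ i)) ∨
          (b = n₂ + 1 ∧ ¬ ∃ i, n₁ + 1 ≤ i ∧ i ≤ n₂ ∧
            ∀ j, i ≤ j → j ≤ n₂ → ∀ X, shiftedHeart t₁ j X → U₁ X)) :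
    tDist t₁ t₂ = ((b - a - 1).toNat : ℕ∞) ∧
    t₁.le a ≤ t₂.le 0 ∧ t₂.le 0 ≤ t₁.le (b - 1) := by

  clear hstable₂
  subst hU₀ hU₁
  have hne : ∀ n : ℤ, ¬ (t₁.le (n + 1) ≤ t₁.le n) := fun n h => hstable₁ (aux_stable t₁ n h)
  have hna : n₁ ≤ a := by rcases ha with ⟨h1, _⟩ | ⟨h1, _⟩ <;> omega
  have han2 : a ≤ n₂ := by rcases ha with ⟨_, h2, _⟩ | ⟨h1, _⟩ <;> omega
  have hbn : n₁ + 1 ≤ b := by rcases hb with ⟨h1, _⟩ | ⟨h1, _⟩ <;> omega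
  have hbn2 : b ≤ n₂ + 1 := by rcases hb with ⟨_, h2, _⟩ | ⟨h1, _⟩ <;> omega
  have haH : ∀ j, n₁ + 1 ≤ j → j ≤ a → ∀ X, t₁.le j X → t₁.ge j X → t₂.le 0 X := by
    intro j hj1 hj2 X hle hge
    rcases ha with ⟨_, _, hall, _⟩ | ⟨ha', _⟩
    · exact (hall j hj1 hj2 X ((aux_shiftedHeart_iff t₁ j X).2 ⟨hle, hge⟩)).2
    · omega
  have hbH : ∀ j, b ≤ j → j ≤ n₂ → ∀ X, t₁.le j X → t₁.ge j X → t₂.ge 1 X := by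
    intro j hj1 hj2 X hle hge
    rcases hb with ⟨_, _, hall, _⟩ | ⟨hb', _⟩
    · exact (hall j hj1 hj2 X ((aux_shiftedHeart_iff t₁ j X).2 ⟨hle, hge⟩)).1
    · omega
  have keyA : ∀ k : ℕ, ∀ c : ℤ, c = n₁ + k → c ≤ a → t₁.le c ≤ t₂.le 0 := by
    intro k
    induction k with
    | zero =>
      intro c hc _
      obtain rfl : c = n₁ := by omega
      exact hlow
    | succ k ih =>
      intro c hc hca
      have hprev : t₁.le (c - 1) ≤ t₂.le 0 := ih (c - 1) (by omega) (by omega)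
      exact step_up t₁ t₂ (c - 1) c (by omega) hprev
        (fun X hle hge => haH c (by omega) hca X hle hge)
  have keyB : ∀ k : ℕ, ∀ c : ℤ, c = n₂ - k → b - 1 ≤ c → t₂.le 0 ≤ t₁.le c := by
    intro k
    induction k with
    | zero =>
      intro c hc _
      obtain rfl : c = n₂ := by omega
      exact hhigh
    | succ k ih =>
      intro c hc hbc
      have hprev : t₂.le 0 ≤ t₁.le (c + 1) := ih (c + 1) (by omega) (by omega)
      exact step_down t₁ t₂ c (c + 1) rfl hprev
        (fun X hle hge => hbH (c + 1) (by omega) (by omega) X hle hge)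
  have hA : t₁.le a ≤ t₂.le 0 := keyA (a - n₁).toNat a (by omega) le_rfl
  have hB : t₂.le 0 ≤ t₁.le (b - 1) := keyB (n₂ - (b - 1)).toNat (b - 1) (by omega) le_rfl
  have hab : a + 1 ≤ b := by
    by_contra h
    push_neg at h
    refine hne (a - 1) ?_
    rw [show a - 1 + 1 = a from by omega]
    intro X hX
    exact t₁.le_monotone (by omega : b - 1 ≤ a - 1) _ (hB X (hA X hX))
  have claim_m : ∀ m : ℤ, t₁.le m ≤ t₂.le 0 → m ≤ a := by
    intro m hm
    by_contra h
    push_neg at h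
    rcases le_or_gt m n₂ with hm2 | hm2
    · have hprop : ∀ j, n₁ + 1 ≤ j → j ≤ a + 1 → ∀ X, shiftedHeart t₁ j X →
          ((t₁.ge n₁ X ∧ t₁.le n₂ X) ∧ t₂.le 0 X) := by
        intro j hj1 hj2 X hX
        obtain ⟨hle, hge⟩ := (aux_shiftedHeart_iff t₁ j X).1 hX
        exact ⟨⟨t₁.ge_antitone (by omega) _ hge, t₁.le_monotone (by omega) _ hle⟩,
          hm X (t₁.le_monotone (by omega) _ hle)⟩
      rcases ha with ⟨_, _, _, hmax⟩ | ⟨ha', hnone⟩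
      · have := hmax (a + 1) (by omega) (by omega) hprop
        omega
      · exact hnone ⟨a + 1, by omega, by omega, hprop⟩
    · refine hne n₂ ?_
      intro X hX
      exact hhigh X (hm X (t₁.le_monotone (by omega : n₂ + 1 ≤ m) _ hX))
  have claim_m' : ∀ m : ℤ, t₂.le 0 ≤ t₁.le m → b - 1 ≤ m := by
    intro m hm
    by_contra h
    push_neg at h
    rcases le_or_gt n₁ m with hm1 | hm1
    · have hprop : ∀ j, b - 1 ≤ j → j ≤ n₂ → ∀ X, shiftedHeart t₁ j X →
          (t₂.ge 1 X ∧ (t₁.ge n₁ X ∧ t₁.le n₂ X)) := by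
        intro j hj1 hj2 X hX
        obtain ⟨hle, hge⟩ := (aux_shiftedHeart_iff t₁ j X).1 hX
        refine ⟨aux_ge_of_orth t₂ X ?_,
          ⟨t₁.ge_antitone (by omega) _ hge, t₁.le_monotone (by omega) _ hle⟩⟩
        intro W hW f
        exact aux_zero t₁ f m j (by omega) (hm W hW) hge
      rcases hb with ⟨_, _, _, hmin⟩ | ⟨hb', hnone⟩
      · have := hmin (b - 1) (by omega) (by omega) hprop
        omega
      · exact hnone ⟨b - 1, by omega, by omega, hprop⟩
    · refine hne (n₁ - 1) ?_
      intro X hX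
      rw [show n₁ - 1 + 1 = n₁ from by omega] at hX
      exact t₁.le_monotone (by omega : m ≤ n₁ - 1) _ (hm X (hlow X hX))
  refine ⟨?_, hA, hB⟩
  apply le_antisymm
  · apply sInf_le
    refine ⟨(b - a - 1).toNat, a, rfl, hA, ?_⟩
    rw [show a + ((b - a - 1).toNat : ℤ) = b - 1 from by omega]
    exact hB
  · apply le_sInf
    rintro d ⟨k, m, rfl, h1, h2⟩
    have h3 : m ≤ a := claim_m m h1
    have h4 : b - 1 ≤ m + k := claim_m' (m + k) h2
    have h5 : (b - a - 1).toNat ≤ k := by omega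
    exact_mod_cast h5
end
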